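/- arXiv:1911.02482 — 3 statements merged into one kernel-verified Lean document; each statement's English description precedes it below -/
import Mathlib

section
/- Let n ≥ 4, let V be an n-dimensional real vector space with a nondegenerate symmetric bilinear form g, and let B be a generalized curvature tensor on V such that (Ric(B))² is not a linear combination of g and Ric(B). If Weyl(B) = (φ/2)·Ric(B)∧Ric(B) + α₁·g∧(Ric(B))² + α₂·g∧Ric(B) + (α₃/2)·g∧g for some real numbers φ, α₁, α₂, α₃, then α₁ = φ/(n−2), α₂ = −κ(B)·φ/(n−2), and α₃ = ((κ(B))² − tr_g((Ric(B))²))·φ/((n−2)(n−1)). -/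
namespace OVAff

variable {V : Type*} [AddCommGroup V] [Module ℝ V]

/-- Kulkarni–Nomizu product of two (0,2)-tensors. -/
noncomputable def KN (E F : V → V → ℝ) : V → V → V → V → ℝ := fun X₁ X₂ X₃ X₄ =>
  E X₁ X₄ * F X₂ X₃ + E X₂ X₃ * F X₁ X₄ - E X₁ X₃ * F X₂ X₄ - E X₂ X₄ * F X₁ X₃

/-- Kulkarni–Nomizu product of a (0,2)-tensor with a (0,4)-tensor. -/
noncomputable def KN4 (E : V → V → ℝ) (T : V → V → V → V → ℝ) :
    V → V → V → V → V → V → ℝ := fun X₁ X₂ X₃ X₄ Y₁ Y₂ =>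
  E X₁ X₄ * T X₂ X₃ Y₁ Y₂ + E X₂ X₃ * T X₁ X₄ Y₁ Y₂
    - E X₁ X₃ * T X₂ X₄ Y₁ Y₂ - E X₂ X₄ * T X₁ X₃ Y₁ Y₂

/-- (X ∧_A Y) Z = A(Y,Z) X − A(X,Z) Y. -/
noncomputable def wedgeVec (A : V → V → ℝ) (X Y Z : V) : V := A Y Z • X - A X Z • Y

/-- Tachibana operator Q(A,T) on a (0,2)-tensor T. -/
noncomputable def Q2 (A T : V → V → ℝ) : V → V → V → V → ℝ :=
  fun X₁ X₂ X Y => -(T (wedgeVec A X Y X₁) X₂ + T X₁ (wedgeVec A X Y X₂))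

/-- Tachibana operator Q(A,T) on a (0,4)-tensor T. -/
noncomputable def Q4 (A : V → V → ℝ) (T : V → V → V → V → ℝ) :
    V → V → V → V → V → V → ℝ := fun X₁ X₂ X₃ X₄ X Y =>
  -(T (wedgeVec A X Y X₁) X₂ X₃ X₄ + T X₁ (wedgeVec A X Y X₂) X₃ X₄
    + T X₁ X₂ (wedgeVec A X Y X₃) X₄ + T X₁ X₂ X₃ (wedgeVec A X Y X₄))

/-- The derivation B·T of a curvature operator family ℬ (with h(ℬ(X,Y)Z,W)=B(X,Y,Z,W))
acting on a (0,2)-tensor T. -/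
noncomputable def dot2 (ℬ : V → V → V → V) (T : V → V → ℝ) : V → V → V → V → ℝ :=
  fun X₁ X₂ X Y => -(T (ℬ X Y X₁) X₂ + T X₁ (ℬ X Y X₂))

/-- The derivation B·T acting on a (0,4)-tensor T. -/
noncomputable def dot4 (ℬ : V → V → V → V) (T : V → V → V → V → ℝ) :
    V → V → V → V → V → V → ℝ := fun X₁ X₂ X₃ X₄ X Y =>
  -(T (ℬ X Y X₁) X₂ X₃ X₄ + T X₁ (ℬ X Y X₂) X₃ X₄
    + T X₁ X₂ (ℬ X Y X₃) X₄ + T X₁ X₂ X₃ (ℬ X Y X₄))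

/-- Ricci contraction of a (0,4)-tensor with respect to an h-orthonormal basis `e`
with signs `ε`. -/
noncomputable def ricci {n : ℕ} (ε : Fin n → ℝ) (e : Fin n → V)
    (B : V → V → V → V → ℝ) : V → V → ℝ :=
  fun X Y => ∑ j, ε j * B (e j) X Y (e j)

/-- Scalar curvature of a (0,4)-tensor. -/
noncomputable def scal {n : ℕ} (ε : Fin n → ℝ) (e : Fin n → V)
    (B : V → V → V → V → ℝ) : ℝ :=
  ∑ j, ε j * ricci ε e B (e j) (e j)

/-- Weyl tensor of a (0,4)-tensor with respect to the metric h. -/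
noncomputable def weyl {n : ℕ} (h : V → V → ℝ) (ε : Fin n → ℝ) (e : Fin n → V)
    (B : V → V → V → V → ℝ) : V → V → V → V → ℝ := fun X₁ X₂ X₃ X₄ =>
  B X₁ X₂ X₃ X₄ - (1 / ((n : ℝ) - 2)) * KN h (ricci ε e B) X₁ X₂ X₃ X₄
    + (scal ε e B / (2 * ((n : ℝ) - 2) * ((n : ℝ) - 1))) * KN h h X₁ X₂ X₃ X₄

/-!
Since `Weyl(B)` is Ricci-flat, contracting the assumed decomposition of `Weyl(B)` gives
`(α₁(n-2) - φ) Ric² + (φκ + α₂(n-2)) Ric + (α₁ tr Ric² + α₂κ + α₃(n-1)) g = 0`.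
As `Ric²` is not a combination of `g` and `Ric`, and hence `Ric` is not a multiple of `g`,
all three coefficients vanish, which are the claimed formulas.
-/

structure IsSignedOrthonormal {ι : Type*} [DecidableEq ι] (g : LinearMap.BilinForm ℝ V)
    (e : Module.Basis ι ℝ V) (ε : ι → ℝ) : Prop where
  sign_mul_self : ∀ j, ε j * ε j = 1
  apply_basis : ∀ j k, g (e j) (e k) = if j = k then ε j else 0

namespace IsSignedOrthonormal

variable {ι : Type*} [DecidableEq ι] {g : LinearMap.BilinForm ℝ V}
  {e : Module.Basis ι ℝ V} {ε : ι → ℝ}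

theorem apply_comm (h : IsSignedOrthonormal g e ε) (X Y : V) : g X Y = g Y X := by
  have hflip : g = LinearMap.flip g := LinearMap.ext_basis e e fun j k => by
    rw [LinearMap.flip_apply, h.apply_basis, h.apply_basis]
    rcases eq_or_ne j k with rfl | hjk
    · rfl
    · simp [hjk, hjk.symm]
  exact LinearMap.congr_fun₂ hflip X Y

variable [Fintype ι]

theorem repr_apply (h : IsSignedOrthonormal g e ε) (v : V) (k : ι) :
    e.repr v k = ε k * g v (e k) := by
  have hv : g v (e k) = e.repr v k * ε k := by
    conv_lhs => rw [← e.sum_repr v]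
    simp only [map_sum, map_smul, LinearMap.sum_apply, LinearMap.smul_apply, smul_eq_mul,
      h.apply_basis, mul_ite, mul_zero, Finset.sum_ite_eq', Finset.mem_univ, if_true]
  rw [hv, mul_left_comm, h.sign_mul_self, mul_one]

theorem sum_mul_apply_left (h : IsSignedOrthonormal g e ε) (F : V →ₗ[ℝ] V →ₗ[ℝ] ℝ) (v Y : V) :
    ∑ j, ε j * g v (e j) * F (e j) Y = F v Y := by
  conv_rhs => rw [← e.sum_repr v]
  simp [h.repr_apply, LinearMap.sum_apply]

theorem sum_mul_apply_right (h : IsSignedOrthonormal g e ε) (F : V →ₗ[ℝ] V →ₗ[ℝ] ℝ) (X v : V) :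
    ∑ j, ε j * g v (e j) * F X (e j) = F X v := by
  conv_rhs => rw [← e.sum_repr v]
  simp [h.repr_apply]

theorem sum_sign_mul_apply_self (h : IsSignedOrthonormal g e ε) :
    ∑ j, ε j * g (e j) (e j) = Fintype.card ι := by
  simp [h.apply_basis, h.sign_mul_self]

theorem trace_eq (h : IsSignedOrthonormal g e ε) (A : V →ₗ[ℝ] V) :
    LinearMap.trace ℝ V A = ∑ j, ε j * g (A (e j)) (e j) := by
  simp [LinearMap.trace_eq_matrix_trace ℝ e, Matrix.trace, LinearMap.toMatrix_apply, h.repr_apply]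

end IsSignedOrthonormal

section Ricci

variable {n : ℕ}

noncomputable def ricciForm (ε : Fin n → ℝ) (e : Fin n → V)
    (B : V →ₗ[ℝ] V →ₗ[ℝ] V →ₗ[ℝ] V →ₗ[ℝ] ℝ) : V →ₗ[ℝ] V →ₗ[ℝ] ℝ :=
  ∑ j, ε j • (B (e j)).compr₂ (LinearMap.applyₗ (e j))

theorem ricciForm_apply (ε : Fin n → ℝ) (e : Fin n → V)
    (B : V →ₗ[ℝ] V →ₗ[ℝ] V →ₗ[ℝ] V →ₗ[ℝ] ℝ) (X Y : V) :
    ricciForm ε e B X Y = ricci ε e (fun X₁ X₂ X₃ X₄ => B X₁ X₂ X₃ X₄) X Y := by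
  simp [ricciForm, ricci, LinearMap.sum_apply]

theorem ricci_add {W : Type*} (ε : Fin n → ℝ) (e : Fin n → W) (T U : W → W → W → W → ℝ)
    (X Y : W) :
    ricci ε e (fun X₁ X₂ X₃ X₄ => T X₁ X₂ X₃ X₄ + U X₁ X₂ X₃ X₄) X Y
      = ricci ε e T X Y + ricci ε e U X Y := by
  simp only [ricci, mul_add, Finset.sum_add_distrib]

theorem ricci_sub {W : Type*} (ε : Fin n → ℝ) (e : Fin n → W) (T U : W → W → W → W → ℝ)
    (X Y : W) :
    ricci ε e (fun X₁ X₂ X₃ X₄ => T X₁ X₂ X₃ X₄ - U X₁ X₂ X₃ X₄) X Y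
      = ricci ε e T X Y - ricci ε e U X Y := by
  simp only [ricci, mul_sub, Finset.sum_sub_distrib]

theorem ricci_const_mul {W : Type*} (ε : Fin n → ℝ) (e : Fin n → W) (c : ℝ)
    (T : W → W → W → W → ℝ) (X Y : W) :
    ricci ε e (fun X₁ X₂ X₃ X₄ => c * T X₁ X₂ X₃ X₄) X Y = c * ricci ε e T X Y := by
  simp only [ricci, Finset.mul_sum, mul_left_comm]

variable {g : LinearMap.BilinForm ℝ V} {e : Module.Basis (Fin n) ℝ V} {ε : Fin n → ℝ}

theorem ricci_KN_metric (h : IsSignedOrthonormal g e ε) (F : V →ₗ[ℝ] V →ₗ[ℝ] ℝ) (X Y : V) :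
    ricci ε e (KN (fun X Y => g X Y) (fun X Y => F X Y)) X Y
      = ((n : ℝ) - 2) * F X Y + (∑ j, ε j * F (e j) (e j)) * g X Y := by
  have hterm : ∀ j, ε j * KN (fun X Y => g X Y) (fun X Y => F X Y) (e j) X Y (e j)
      = ε j * ε j * F X Y + ε j * F (e j) (e j) * g X Y
        - ε j * g Y (e j) * F X (e j) - ε j * g X (e j) * F (e j) Y := by
    intro j
    simp only [KN, h.apply_basis, if_true, h.apply_comm (e j) Y]
    ring
  simp only [ricci, hterm, Finset.sum_sub_distrib, Finset.sum_add_distrib, h.sum_mul_apply_left,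
    h.sum_mul_apply_right, h.sign_mul_self, ← Finset.sum_mul, Finset.sum_const, Finset.card_univ,
    Fintype.card_fin, nsmul_eq_mul, mul_one]
  ring

theorem ricci_KN_self (h : IsSignedOrthonormal g e ε) (F : V →ₗ[ℝ] V →ₗ[ℝ] ℝ) {D : V → V}
    (hD : ∀ X Y, g (D X) Y = F X Y) (X Y : V) :
    ricci ε e (KN (fun X Y => F X Y) (fun X Y => F X Y)) X Y
      = 2 * (∑ j, ε j * F (e j) (e j)) * F X Y - 2 * F (D X) Y := by
  have hsq : ∑ j, ε j * F X (e j) * F (e j) Y = F (D X) Y := by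
    simp only [← hD X, h.sum_mul_apply_left]
  have hterm : ∀ j, ε j * KN (fun X Y => F X Y) (fun X Y => F X Y) (e j) X Y (e j)
      = 2 * (ε j * F (e j) (e j)) * F X Y - 2 * (ε j * F X (e j) * F (e j) Y) := by
    intro j
    simp only [KN]
    ring
  simp only [ricci, hterm, Finset.sum_sub_distrib, ← Finset.mul_sum, ← Finset.sum_mul, hsq]

theorem ricci_weyl (h : IsSignedOrthonormal g e ε) (hn : 3 ≤ n)
    (B : V →ₗ[ℝ] V →ₗ[ℝ] V →ₗ[ℝ] V →ₗ[ℝ] ℝ) (X Y : V) :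
    ricci ε e (weyl (fun X Y => g X Y) ε e (fun X₁ X₂ X₃ X₄ => B X₁ X₂ X₃ X₄)) X Y = 0 := by
  have hn' : (3 : ℝ) ≤ n := by exact_mod_cast hn
  have hn₂ : (n : ℝ) - 2 ≠ 0 := by linarith
  have hn₁ : (n : ℝ) - 1 ≠ 0 := by linarith
  set R := ricciForm ε e B
  have hR : ricci ε e (fun X₁ X₂ X₃ X₄ => B X₁ X₂ X₃ X₄) = fun X Y => R X Y := by
    funext X Y
    exact (ricciForm_apply ε e B X Y).symm
  have hsplit : ricci ε e (weyl (fun X Y => g X Y) ε e (fun X₁ X₂ X₃ X₄ => B X₁ X₂ X₃ X₄)) X Y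
      = R X Y - 1 / ((n : ℝ) - 2) * ricci ε e (KN (fun X Y => g X Y) (fun X Y => R X Y)) X Y
        + (∑ j, ε j * R (e j) (e j)) / (2 * ((n : ℝ) - 2) * ((n : ℝ) - 1))
          * ricci ε e (KN (fun X Y => g X Y) (fun X Y => g X Y)) X Y := by
    unfold weyl scal
    rw [ricci_add, ricci_sub, ricci_const_mul, ricci_const_mul, hR]
  rw [hsplit, ricci_KN_metric h, ricci_KN_metric h, h.sum_sign_mul_apply_self, Fintype.card_fin]
  field_simp
  ring

theorem ricci_eq_of_eq_KN_comb (h : IsSignedOrthonormal g e ε) (R : V →ₗ[ℝ] V →ₗ[ℝ] ℝ)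
    {D : V →ₗ[ℝ] V} (hD : ∀ X Y, g (D X) Y = R X Y) {T : V → V → V → V → ℝ} {φ α₁ α₂ α₃ : ℝ}
    (hT : ∀ X₁ X₂ X₃ X₄, T X₁ X₂ X₃ X₄
      = (φ / 2) * KN (fun X Y => R X Y) (fun X Y => R X Y) X₁ X₂ X₃ X₄
        + α₁ * KN (fun X Y => g X Y) (fun X Y => R (D X) Y) X₁ X₂ X₃ X₄
        + α₂ * KN (fun X Y => g X Y) (fun X Y => R X Y) X₁ X₂ X₃ X₄
        + (α₃ / 2) * KN (fun X Y => g X Y) (fun X Y => g X Y) X₁ X₂ X₃ X₄) (X Y : V) :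
    ricci ε e T X Y
      = (α₁ * ((n : ℝ) - 2) - φ) * R (D X) Y
        + (φ * ∑ j, ε j * R (e j) (e j) + α₂ * ((n : ℝ) - 2)) * R X Y
        + (α₁ * LinearMap.trace ℝ V (D ∘ₗ D) + α₂ * ∑ j, ε j * R (e j) (e j)
          + α₃ * ((n : ℝ) - 1)) * g X Y := by
  obtain rfl : T = _ := funext fun X₁ => funext fun X₂ => funext fun X₃ => funext (hT X₁ X₂ X₃)
  have hRD := ricci_KN_metric h (R ∘ₗ D) X Y
  simp only [LinearMap.comp_apply] at hRD
  rw [ricci_add, ricci_add, ricci_add, ricci_const_mul, ricci_const_mul, ricci_const_mul,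
    ricci_const_mul, ricci_KN_self h R hD, hRD, ricci_KN_metric h, ricci_KN_metric h,
    h.sum_sign_mul_apply_self, Fintype.card_fin, h.trace_eq]
  simp only [LinearMap.comp_apply, hD]
  ring

end Ricci

theorem coeffs_eq_zero_of_not_exists_comb {W : Type*} {S R : W → W → ℝ} {D : W → W}
    (hD : ∀ X Y, S (D X) Y = R X Y) (hS : ∃ X Y, S X Y ≠ 0)
    (hnl : ¬ ∃ a b : ℝ, ∀ X Y, R (D X) Y = a * S X Y + b * R X Y) {c₁ c₂ c₃ : ℝ}
    (h : ∀ X Y, c₁ * R (D X) Y + c₂ * R X Y + c₃ * S X Y = 0) :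
    c₁ = 0 ∧ c₂ = 0 ∧ c₃ = 0 := by
  have hc₁ : c₁ = 0 := by
    by_contra hc₁
    refine hnl ⟨-c₃ / c₁, -c₂ / c₁, fun X Y => ?_⟩
    field_simp
    linear_combination h X Y
  have hc₂ : c₂ = 0 := by
    by_contra hc₂
    -- `R` is then a multiple of `S`, and applying this at `D X` makes `R ∘ D` one too.
    refine hnl ⟨0, -c₃ / c₂, fun X Y => ?_⟩
    rw [zero_mul, zero_add, div_mul_eq_mul_div, eq_div_iff hc₂]
    linear_combination h (D X) Y - c₃ * hD X Y - R (D (D X)) Y * hc₁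
  obtain ⟨X, Y, hXY⟩ := hS
  refine ⟨hc₁, hc₂, ?_⟩
  have := h X Y
  simp only [hc₁, hc₂, zero_mul, zero_add, mul_eq_zero] at this
  exact this.resolve_right hXY

theorem statement17_general
    {V : Type*} [AddCommGroup V] [Module ℝ V]
    (n : ℕ) (hn : 4 ≤ n)
    (g : LinearMap.BilinForm ℝ V)
    (e : Module.Basis (Fin n) ℝ V) (ε : Fin n → ℝ)
    (hε : ∀ j, ε j = 1 ∨ ε j = -1)
    (he : ∀ j k, g (e j) (e k) = if j = k then ε j else 0)
    (B : V →ₗ[ℝ] V →ₗ[ℝ] V →ₗ[ℝ] V →ₗ[ℝ] ℝ)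
    (Bf : V → V → V → V → ℝ) (hBf : Bf = fun X₁ X₂ X₃ X₄ => B X₁ X₂ X₃ X₄)
    (Ric : V → V → ℝ) (hRic : Ric = ricci ε (⇑e) Bf)
    (κ : ℝ) (hκ : κ = scal ε (⇑e) Bf)
    (Wl : V → V → V → V → ℝ) (hWl : Wl = weyl (fun X Y => g X Y) ε (⇑e) Bf)
    (𝒟 : V →ₗ[ℝ] V) (h𝒟 : ∀ X Y, g (𝒟 X) Y = Ric X Y)
    (hnl : ¬ ∃ a b : ℝ, ∀ X Y, Ric (𝒟 X) Y = a * g X Y + b * Ric X Y)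
    (φ α₁ α₂ α₃ : ℝ)
    (hdec : ∀ X₁ X₂ X₃ X₄, Wl X₁ X₂ X₃ X₄
      = (φ / 2) * KN Ric Ric X₁ X₂ X₃ X₄
        + α₁ * KN (fun X Y => g X Y) (fun X Y => Ric (𝒟 X) Y) X₁ X₂ X₃ X₄
        + α₂ * KN (fun X Y => g X Y) Ric X₁ X₂ X₃ X₄
        + (α₃ / 2) * KN (fun X Y => g X Y) (fun X Y => g X Y) X₁ X₂ X₃ X₄) :
    α₁ = φ / ((n : ℝ) - 2) ∧
    α₂ = -(κ * φ) / ((n : ℝ) - 2) ∧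
    α₃ = ((κ ^ 2 - LinearMap.trace ℝ V (𝒟 ∘ₗ 𝒟)) * φ) / (((n : ℝ) - 2) * ((n : ℝ) - 1)) := by
  have hn' : (4 : ℝ) ≤ n := by exact_mod_cast hn
  have hn₂ : (n : ℝ) - 2 ≠ 0 := by linarith
  have hn₁ : (n : ℝ) - 1 ≠ 0 := by linarith
  have hg : IsSignedOrthonormal g e ε :=
    ⟨fun j => by rcases hε j with hj | hj <;> norm_num [hj], he⟩
  have hg₀ : g (e ⟨0, by omega⟩) (e ⟨0, by omega⟩) ≠ 0 := by
    rcases hε ⟨0, by omega⟩ with h₀ | h₀ <;> simp [he, h₀]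
  have hW : ∀ X Y, ricci ε e Wl X Y = 0 := by
    subst hWl hBf
    exact ricci_weyl hg (by omega) B
  set R := ricciForm ε e B
  obtain rfl : Ric = fun X Y => R X Y := by
    funext X Y
    rw [hRic, hBf, ricciForm_apply]
  have hκR : ∑ j, ε j * R (e j) (e j) = κ := by
    simp only [hκ, hBf, scal, ricciForm_apply, R]
  obtain ⟨hc₁, hc₂, hc₃⟩ := coeffs_eq_zero_of_not_exists_comb (S := fun X Y => g X Y)
    h𝒟 ⟨_, _, hg₀⟩ hnl fun X Y => by rw [← hW X Y, ricci_eq_of_eq_KN_comb hg R h𝒟 hdec, hκR]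
  refine ⟨?_, ?_, ?_⟩ <;> field_simp
  · linear_combination hc₁
  · linear_combination hc₂
  · linear_combination ((n : ℝ) - 2) * hc₃ - LinearMap.trace ℝ V (𝒟 ∘ₗ 𝒟) * hc₁ - κ * hc₂

/-- coefficients of a Weyl-tensor decomposition are determined when
(Ric(B))² is not a combination of g and Ric(B). -/
theorem statement17
    {V : Type*} [AddCommGroup V] [Module ℝ V]
    (n : ℕ) (hn : 4 ≤ n)
    (g : LinearMap.BilinForm ℝ V)
    (hgsymm : ∀ X Y, g X Y = g Y X)
    (hgnd : ∀ X : V, (∀ Y, g X Y = 0) → X = 0)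
    (e : Module.Basis (Fin n) ℝ V) (ε : Fin n → ℝ)
    (hε : ∀ j, ε j = 1 ∨ ε j = -1)
    (he : ∀ j k, g (e j) (e k) = if j = k then ε j else 0)
    (B : V →ₗ[ℝ] V →ₗ[ℝ] V →ₗ[ℝ] V →ₗ[ℝ] ℝ)
    (Bf : V → V → V → V → ℝ) (hBf : Bf = fun X₁ X₂ X₃ X₄ => B X₁ X₂ X₃ X₄)
    (hB1 : ∀ X₁ X₂ X₃ X₄, Bf X₁ X₂ X₃ X₄ = - Bf X₂ X₁ X₃ X₄)
    (hB2 : ∀ X₁ X₂ X₃ X₄, Bf X₁ X₂ X₃ X₄ = Bf X₃ X₄ X₁ X₂)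
    (hB3 : ∀ X₁ X₂ X₃ X₄, Bf X₁ X₂ X₃ X₄ + Bf X₂ X₃ X₁ X₄ + Bf X₃ X₁ X₂ X₄ = 0)
    (Ric : V → V → ℝ) (hRic : Ric = ricci ε (⇑e) Bf)
    (κ : ℝ) (hκ : κ = scal ε (⇑e) Bf)
    (Wl : V → V → V → V → ℝ) (hWl : Wl = weyl (fun X Y => g X Y) ε (⇑e) Bf)
    (𝒟 : V →ₗ[ℝ] V) (h𝒟 : ∀ X Y, g (𝒟 X) Y = Ric X Y)
    (hnl : ¬ ∃ a b : ℝ, ∀ X Y, Ric (𝒟 X) Y = a * g X Y + b * Ric X Y)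
    (φ α₁ α₂ α₃ : ℝ)
    (hdec : ∀ X₁ X₂ X₃ X₄, Wl X₁ X₂ X₃ X₄
      = (φ / 2) * KN Ric Ric X₁ X₂ X₃ X₄
        + α₁ * KN (fun X Y => g X Y) (fun X Y => Ric (𝒟 X) Y) X₁ X₂ X₃ X₄
        + α₂ * KN (fun X Y => g X Y) Ric X₁ X₂ X₃ X₄
        + (α₃ / 2) * KN (fun X Y => g X Y) (fun X Y => g X Y) X₁ X₂ X₃ X₄) :
    α₁ = φ / ((n : ℝ) - 2) ∧
    α₂ = -(κ * φ) / ((n : ℝ) - 2) ∧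
    α₃ = ((κ ^ 2 - LinearMap.trace ℝ V (𝒟 ∘ₗ 𝒟)) * φ) / (((n : ℝ) - 2) * ((n : ℝ) - 1)) :=
  statement17_general n hn g e ε hε he B Bf hBf Ric hRic κ hκ Wl hWl 𝒟 h𝒟 hnl φ α₁ α₂ α₃ hdec

end OVAff
end

section
/- Let n ≥ 4, let V be an n-dimensional real vector space with a nondegenerate symmetric bilinear form g, and let B be a generalized curvature tensor on V such that (Ric(B))² is not a linear combination of g and Ric(B). If B = (φ/2)·Ric(B)∧Ric(B) + β₁·g∧(Ric(B))² + β₂·g∧Ric(B) + (β₃/2)·g∧g for some real numbers φ, β₁, β₂, β₃, then β₁ = φ/(n−2), β₂ = (1 − κ(B)·φ)/(n−2), and β₃ = (((κ(B))² − tr_g((Ric(B))²))·φ − κ(B))/((n−2)(n−1)). -/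
namespace OVAff

variable {V : Type*} [AddCommGroup V] [Module ℝ V]

/-!
Contract the decomposition of `B`. Writing `𝒟` for the Ricci endomorphism, the Ricci contraction
of `E ∧ F` for `g`-self-adjoint `ℰ, ℱ` is `tr ℰ · F + tr ℱ · E - E(ℱ·,·) - F(ℰ·,·)`, so the
equation `Ric = Ric(B)` becomes
`(β₁(n-2) - φ) Ric² + (φκ + β₂(n-2) - 1) Ric + (β₁ tr 𝒟² + β₂κ + β₃(n-1)) g = 0`.
As `Ric²` is not a combination of `g` and `Ric` (and hence `Ric` is not a multiple of `g`),
all three coefficients vanish, which gives `β₁`, `β₂`, `β₃`.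
-/

open Module Finset

section Ricci

variable {α : Type*} {n : ℕ} (ε : Fin n → ℝ) (e : Fin n → α)

theorem ricci_add_s18 (B C : α → α → α → α → ℝ) (X Y : α) :
    ricci ε e (B + C) X Y = ricci ε e B X Y + ricci ε e C X Y := by
  simp only [ricci, Pi.add_apply, mul_add, sum_add_distrib]

theorem ricci_smul (c : ℝ) (B : α → α → α → α → ℝ) (X Y : α) :
    ricci ε e (c • B) X Y = c * ricci ε e B X Y := by
  simp only [ricci, Pi.smul_apply, smul_eq_mul, mul_sum]
  exact sum_congr rfl fun j _ => by ring

theorem ricci_comm {B : α → α → α → α → ℝ}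
    (hB1 : ∀ X₁ X₂ X₃ X₄, B X₁ X₂ X₃ X₄ = - B X₂ X₁ X₃ X₄)
    (hB2 : ∀ X₁ X₂ X₃ X₄, B X₁ X₂ X₃ X₄ = B X₃ X₄ X₁ X₂) (X Y : α) :
    ricci ε e B X Y = ricci ε e B Y X := by
  have hB34 : ∀ X₁ X₂ X₃ X₄, B X₁ X₂ X₃ X₄ = - B X₁ X₂ X₄ X₃ := fun X₁ X₂ X₃ X₄ => by
    rw [hB2, hB1, hB2]
  refine sum_congr rfl fun j _ => ?_
  rw [hB2 (e j) X, hB1, hB34, neg_neg]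

end Ricci

section OrthonormalBasis

variable {n : ℕ} {g : LinearMap.BilinForm ℝ V} {e : Basis (Fin n) ℝ V} {ε : Fin n → ℝ}

theorem repr_eq_sign_mul (hε : ∀ j, ε j = 1 ∨ ε j = -1)
    (he : ∀ j k, g (e j) (e k) = if j = k then ε j else 0) (Z : V) (j : Fin n) :
    e.repr Z j = ε j * g Z (e j) := by
  have hZ : g Z (e j) = e.repr Z j * ε j := by
    calc g Z (e j) = g (∑ k, e.repr Z k • e k) (e j) := by rw [e.sum_repr]
      _ = e.repr Z j * ε j := by
        simp only [map_sum, map_smul, LinearMap.sum_apply, LinearMap.smul_apply, smul_eq_mul, he,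
          mul_ite, mul_zero, sum_ite_eq', mem_univ, if_true]
  rw [hZ]
  rcases hε j with h | h <;> rw [h] <;> ring

theorem sum_sign_mul_apply (hε : ∀ j, ε j = 1 ∨ ε j = -1)
    (he : ∀ j k, g (e j) (e k) = if j = k then ε j else 0) (f : V →ₗ[ℝ] ℝ) (W : V) :
    ∑ j, ε j * (g W (e j) * f (e j)) = f W := by
  conv_rhs => rw [← e.sum_repr W]
  simp only [map_sum, map_smul, smul_eq_mul, repr_eq_sign_mul hε he, mul_assoc]

theorem trace_eq_sum_sign_mul (hε : ∀ j, ε j = 1 ∨ ε j = -1)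
    (he : ∀ j k, g (e j) (e k) = if j = k then ε j else 0) (𝒜 : V →ₗ[ℝ] V) :
    LinearMap.trace ℝ V 𝒜 = ∑ j, ε j * g (𝒜 (e j)) (e j) := by
  simp [LinearMap.trace_eq_matrix_trace ℝ e, Matrix.trace, LinearMap.toMatrix_apply,
    repr_eq_sign_mul hε he]

theorem ricci_KN (hε : ∀ j, ε j = 1 ∨ ε j = -1)
    (he : ∀ j k, g (e j) (e k) = if j = k then ε j else 0)
    {E F : V → V → ℝ} {ℰ ℱ : V →ₗ[ℝ] V} (hE : ∀ X Y, E X Y = g (ℰ X) Y)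
    (hF : ∀ X Y, F X Y = g (ℱ X) Y) (hEsymm : ∀ X Y, E X Y = E Y X)
    (hFsymm : ∀ X Y, F X Y = F Y X) (X Y : V) :
    ricci ε e (KN E F) X Y = LinearMap.trace ℝ V ℰ * F X Y + LinearMap.trace ℝ V ℱ * E X Y
      - E (ℱ X) Y - F (ℰ X) Y := by
  have htr : ∀ {G : V → V → ℝ} {𝒢 : V →ₗ[ℝ] V}, (∀ X Y, G X Y = g (𝒢 X) Y) →
      ∑ j, ε j * G (e j) (e j) = LinearMap.trace ℝ V 𝒢 := fun hG => by
    simp only [trace_eq_sum_sign_mul hε he, hG]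
  have hEF : ∑ j, ε j * (E (e j) Y * F X (e j)) = E (ℱ X) Y := by
    calc _ = ∑ j, ε j * (g (ℱ X) (e j) * g (ℰ Y) (e j)) :=
          sum_congr rfl fun j _ => by rw [hEsymm, hE, hF]; ring
      _ = E (ℱ X) Y := by rw [sum_sign_mul_apply hε he, ← hE, hEsymm]
  have hFE : ∑ j, ε j * (E X (e j) * F (e j) Y) = F (ℰ X) Y := by
    calc _ = ∑ j, ε j * (g (ℰ X) (e j) * g (ℱ Y) (e j)) :=
          sum_congr rfl fun j _ => by rw [hFsymm, hE, hF]
      _ = F (ℰ X) Y := by rw [sum_sign_mul_apply hε he, ← hF, hFsymm]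
  rw [← htr hE, ← htr hF, ← hEF, ← hFE, sum_mul, sum_mul, ← sum_add_distrib,
    ← sum_sub_distrib, ← sum_sub_distrib]
  exact sum_congr rfl fun j _ => by simp only [KN]; ring

theorem ricci_KN_decomposition (hε : ∀ j, ε j = 1 ∨ ε j = -1)
    (he : ∀ j k, g (e j) (e k) = if j = k then ε j else 0) (hgsymm : ∀ X Y, g X Y = g Y X)
    {Ric : V → V → ℝ} {𝒟 : V →ₗ[ℝ] V} (h𝒟 : ∀ X Y, g (𝒟 X) Y = Ric X Y)
    (hRicsymm : ∀ X Y, Ric X Y = Ric Y X) {B : V → V → V → V → ℝ} {φ β₁ β₂ β₃ : ℝ}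
    (hB : ∀ X₁ X₂ X₃ X₄, B X₁ X₂ X₃ X₄
      = (φ / 2) * KN Ric Ric X₁ X₂ X₃ X₄
        + β₁ * KN (fun X Y => g X Y) (fun X Y => Ric (𝒟 X) Y) X₁ X₂ X₃ X₄
        + β₂ * KN (fun X Y => g X Y) Ric X₁ X₂ X₃ X₄
        + (β₃ / 2) * KN (fun X Y => g X Y) (fun X Y => g X Y) X₁ X₂ X₃ X₄) (X Y : V) :
    ricci ε e B X Y
      = (φ * LinearMap.trace ℝ V 𝒟 + β₂ * ((n : ℝ) - 2)) * Ric X Y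
        + (β₁ * ((n : ℝ) - 2) - φ) * Ric (𝒟 X) Y
        + (β₁ * LinearMap.trace ℝ V (𝒟 ∘ₗ 𝒟) + β₂ * LinearMap.trace ℝ V 𝒟
          + β₃ * ((n : ℝ) - 1)) * g X Y := by
  have hRic : ∀ X Y, Ric X Y = g (𝒟 X) Y := fun X Y => (h𝒟 X Y).symm
  have hg : ∀ X Y, g X Y = g ((LinearMap.id : V →ₗ[ℝ] V) X) Y := fun _ _ => rfl
  have hsq : ∀ X Y, Ric (𝒟 X) Y = g ((𝒟 ∘ₗ 𝒟) X) Y := fun X Y => hRic _ _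
  have hsq_symm : ∀ X Y, Ric (𝒟 X) Y = Ric (𝒟 Y) X := fun X Y => by
    rw [hRicsymm, hRic Y, hgsymm, ← hRic, hRicsymm]
  have htrid : LinearMap.trace ℝ V LinearMap.id = n := by
    have := Module.Finite.of_basis e
    rw [LinearMap.trace_id, finrank_eq_card_basis e, Fintype.card_fin]
  have hB' : B = (φ / 2) • KN Ric Ric
      + β₁ • KN (fun X Y => g X Y) (fun X Y => Ric (𝒟 X) Y)
      + β₂ • KN (fun X Y => g X Y) Ric + (β₃ / 2) • KN (fun X Y => g X Y) (fun X Y => g X Y) := by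
    funext X₁ X₂ X₃ X₄
    exact hB X₁ X₂ X₃ X₄
  rw [hB', ricci_add_s18, ricci_add_s18, ricci_add_s18, ricci_smul, ricci_smul, ricci_smul, ricci_smul,
    ricci_KN hε he hRic hRic hRicsymm hRicsymm, ricci_KN hε he hg hsq hgsymm hsq_symm,
    ricci_KN hε he hg hRic hgsymm hRicsymm, ricci_KN hε he hg hg hgsymm hgsymm, htrid]
  simp only [LinearMap.comp_apply, LinearMap.id_apply]
  linear_combination -β₁ * h𝒟 (𝒟 X) Y - β₂ * h𝒟 X Y

end OrthonormalBasis

theorem coeffs_eq_zero_of_sq_not_mem_span {α : Type*} {G R : α → α → ℝ} {𝒟 : α → α}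
    (h𝒟 : ∀ X Y, G (𝒟 X) Y = R X Y)
    (hnl : ¬ ∃ a b : ℝ, ∀ X Y, R (𝒟 X) Y = a * G X Y + b * R X Y)
    (hG : ∃ X Y, G X Y ≠ 0) {a b c : ℝ}
    (h : ∀ X Y, a * R (𝒟 X) Y + b * R X Y + c * G X Y = 0) : a = 0 ∧ b = 0 ∧ c = 0 := by
  have ha : a = 0 := by
    by_contra ha
    refine hnl ⟨-c / a, -b / a, fun X Y => ?_⟩
    field_simp
    linear_combination h X Y
  have hb : b = 0 := by
    by_contra hb
    refine hnl ⟨0, -c / b, fun X Y => ?_⟩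
    field_simp
    linear_combination h (𝒟 X) Y - c * h𝒟 X Y - R (𝒟 (𝒟 X)) Y * ha
  obtain ⟨X, Y, hXY⟩ := hG
  refine ⟨ha, hb, (mul_eq_zero.mp ?_).resolve_right hXY⟩
  linear_combination h X Y - R (𝒟 X) Y * ha - R X Y * hb

theorem statement18_general
    {V : Type*} [AddCommGroup V] [Module ℝ V]
    (n : ℕ) (hn : 4 ≤ n)
    (g : LinearMap.BilinForm ℝ V)
    (hgsymm : ∀ X Y, g X Y = g Y X)
    (e : Module.Basis (Fin n) ℝ V) (ε : Fin n → ℝ)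
    (hε : ∀ j, ε j = 1 ∨ ε j = -1)
    (he : ∀ j k, g (e j) (e k) = if j = k then ε j else 0)
    (Bf : V → V → V → V → ℝ)
    (hB1 : ∀ X₁ X₂ X₃ X₄, Bf X₁ X₂ X₃ X₄ = - Bf X₂ X₁ X₃ X₄)
    (hB2 : ∀ X₁ X₂ X₃ X₄, Bf X₁ X₂ X₃ X₄ = Bf X₃ X₄ X₁ X₂)
    (Ric : V → V → ℝ) (hRic : Ric = ricci ε (⇑e) Bf)
    (κ : ℝ) (hκ : κ = scal ε (⇑e) Bf)
    (𝒟 : V →ₗ[ℝ] V) (h𝒟 : ∀ X Y, g (𝒟 X) Y = Ric X Y)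
    (hnl : ¬ ∃ a b : ℝ, ∀ X Y, Ric (𝒟 X) Y = a * g X Y + b * Ric X Y)
    (φ β₁ β₂ β₃ : ℝ)
    (hdec : ∀ X₁ X₂ X₃ X₄, Bf X₁ X₂ X₃ X₄
      = (φ / 2) * KN Ric Ric X₁ X₂ X₃ X₄
        + β₁ * KN (fun X Y => g X Y) (fun X Y => Ric (𝒟 X) Y) X₁ X₂ X₃ X₄
        + β₂ * KN (fun X Y => g X Y) Ric X₁ X₂ X₃ X₄
        + (β₃ / 2) * KN (fun X Y => g X Y) (fun X Y => g X Y) X₁ X₂ X₃ X₄) :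
    β₁ = φ / ((n : ℝ) - 2) ∧
    β₂ = (1 - κ * φ) / ((n : ℝ) - 2) ∧
    β₃ = (((κ ^ 2 - LinearMap.trace ℝ V (𝒟 ∘ₗ 𝒟)) * φ) - κ)
      / (((n : ℝ) - 2) * ((n : ℝ) - 1)) := by
  have hRicsymm : ∀ X Y, Ric X Y = Ric Y X := by
    subst hRic
    exact ricci_comm ε e hB1 hB2
  have htr𝒟 : LinearMap.trace ℝ V 𝒟 = κ := by
    simp only [trace_eq_sum_sign_mul hε he, hκ, scal, ← hRic, h𝒟]
  have hcontr : ∀ X Y, (β₁ * ((n : ℝ) - 2) - φ) * Ric (𝒟 X) Y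
      + (φ * κ + β₂ * ((n : ℝ) - 2) - 1) * Ric X Y
      + (β₁ * LinearMap.trace ℝ V (𝒟 ∘ₗ 𝒟) + β₂ * κ + β₃ * ((n : ℝ) - 1)) * g X Y = 0 := by
    intro X Y
    have h := ricci_KN_decomposition hε he hgsymm h𝒟 hRicsymm hdec X Y
    rw [← hRic, htr𝒟] at h
    linear_combination -h
  have hg_ne : ∃ X Y, g X Y ≠ 0 := by
    let j : Fin n := ⟨0, by omega⟩
    refine ⟨e j, e j, ?_⟩
    rw [he, if_pos rfl]
    rcases hε j with h | h <;> norm_num [h]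
  obtain ⟨h₁, h₂, h₃⟩ :=
    coeffs_eq_zero_of_sq_not_mem_span (G := fun X Y => g X Y) h𝒟 hnl hg_ne hcontr
  have hn4 : (4 : ℝ) ≤ n := by exact_mod_cast hn
  have hn2 : (n : ℝ) - 2 ≠ 0 := by linarith
  have hn1 : (n : ℝ) - 1 ≠ 0 := by linarith
  refine ⟨by field_simp; linarith, by field_simp; linarith, ?_⟩
  field_simp
  linear_combination ((n : ℝ) - 2) * h₃ - LinearMap.trace ℝ V (𝒟 ∘ₗ 𝒟) * h₁ - κ * h₂

/-- coefficients of a curvature-tensor decomposition are determined when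
(Ric(B))² is not a combination of g and Ric(B). -/
theorem statement18
    {V : Type*} [AddCommGroup V] [Module ℝ V]
    (n : ℕ) (hn : 4 ≤ n)
    (g : LinearMap.BilinForm ℝ V)
    (hgsymm : ∀ X Y, g X Y = g Y X)
    (hgnd : ∀ X : V, (∀ Y, g X Y = 0) → X = 0)
    (e : Module.Basis (Fin n) ℝ V) (ε : Fin n → ℝ)
    (hε : ∀ j, ε j = 1 ∨ ε j = -1)
    (he : ∀ j k, g (e j) (e k) = if j = k then ε j else 0)
    (B : V →ₗ[ℝ] V →ₗ[ℝ] V →ₗ[ℝ] V →ₗ[ℝ] ℝ)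
    (Bf : V → V → V → V → ℝ) (hBf : Bf = fun X₁ X₂ X₃ X₄ => B X₁ X₂ X₃ X₄)
    (hB1 : ∀ X₁ X₂ X₃ X₄, Bf X₁ X₂ X₃ X₄ = - Bf X₂ X₁ X₃ X₄)
    (hB2 : ∀ X₁ X₂ X₃ X₄, Bf X₁ X₂ X₃ X₄ = Bf X₃ X₄ X₁ X₂)
    (hB3 : ∀ X₁ X₂ X₃ X₄, Bf X₁ X₂ X₃ X₄ + Bf X₂ X₃ X₁ X₄ + Bf X₃ X₁ X₂ X₄ = 0)
    (Ric : V → V → ℝ) (hRic : Ric = ricci ε (⇑e) Bf)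
    (κ : ℝ) (hκ : κ = scal ε (⇑e) Bf)
    (Wl : V → V → V → V → ℝ) (hWl : Wl = weyl (fun X Y => g X Y) ε (⇑e) Bf)
    (𝒟 : V →ₗ[ℝ] V) (h𝒟 : ∀ X Y, g (𝒟 X) Y = Ric X Y)
    (hnl : ¬ ∃ a b : ℝ, ∀ X Y, Ric (𝒟 X) Y = a * g X Y + b * Ric X Y)
    (φ β₁ β₂ β₃ : ℝ)
    (hdec : ∀ X₁ X₂ X₃ X₄, Bf X₁ X₂ X₃ X₄
      = (φ / 2) * KN Ric Ric X₁ X₂ X₃ X₄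
        + β₁ * KN (fun X Y => g X Y) (fun X Y => Ric (𝒟 X) Y) X₁ X₂ X₃ X₄
        + β₂ * KN (fun X Y => g X Y) Ric X₁ X₂ X₃ X₄
        + (β₃ / 2) * KN (fun X Y => g X Y) (fun X Y => g X Y) X₁ X₂ X₃ X₄) :
    β₁ = φ / ((n : ℝ) - 2) ∧
    β₂ = (1 - κ * φ) / ((n : ℝ) - 2) ∧
    β₃ = (((κ ^ 2 - LinearMap.trace ℝ V (𝒟 ∘ₗ 𝒟)) * φ) - κ)
      / (((n : ℝ) - 2) * ((n : ℝ) - 1)) :=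
  statement18_general n hn g hgsymm e ε hε he Bf hB1 hB2 Ric hRic κ hκ 𝒟 h𝒟 hnl φ β₁ β₂ β₃ hdec

end OVAff
end

section
/- Let n ≥ 3, let V be an n-dimensional real vector space with a nondegenerate symmetric bilinear form g, and let A be a symmetric bilinear form on V with rank(A) = 2. Then: (a) A³ = tr(A)·A² + (1/2)(tr(A²) − (tr A)²)·A; (b) A∧A² = (1/2)·tr(A)·A∧A; (c) A²∧A² = −(1/2)(tr(A²) − (tr A)²)·A∧A; (d) (A² − tr(A)·A)∧(A² − tr(A)·A) = −(1/2)(tr(A²) − (tr A)²)·A∧A. -/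
namespace OVAff

variable {V : Type*} [AddCommGroup V] [Module ℝ V]

/-!
Write `𝒜 = ι ∘ π` through the plane `W = range 𝒜` and put `B = π ∘ ι`. Then `A`, `A²`, `A³` are
the forms `(X, Y) ↦ g (ι (f (π X))) Y` for `f = 1, B, B²`, and (a) is the Cayley–Hamilton
identity of `B` on the plane. For fixed `X₃, X₄`, the Kulkarni–Nomizu product of two such forms
is an alternating bilinear form `β` evaluated at `π X₁, π X₂`; on a plane
`β (f u) (h v) + β (h u) (f v) = (tr f tr h - tr (f h)) β u v`, which gives (b) and (c), and (d)
follows from them by bilinearity of the product.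
-/

open LinearMap Module

section TwoDim

variable {W : Type*} [AddCommGroup W] [Module ℝ W]

theorem _root_.LinearMap.IsAlt.apply_eq_repr_mul_apply_basis {β : W →ₗ[ℝ] W →ₗ[ℝ] ℝ}
    (hβ : β.IsAlt) (b : Basis (Fin 2) ℝ W) (x y : W) :
    β x y = (b.repr x 0 * b.repr y 1 - b.repr x 1 * b.repr y 0) * β (b 0) (b 1) := by
  conv_lhs => rw [← b.sum_repr x, ← b.sum_repr y]
  simp only [Fin.sum_univ_two, map_add, map_smul, LinearMap.add_apply, LinearMap.smul_apply,
    smul_eq_mul, hβ.self_eq_zero, ← LinearMap.IsAlt.neg hβ (b 0) (b 1)]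
  ring

theorem _root_.Module.Basis.repr_apply_fin_two (b : Basis (Fin 2) ℝ W) (f : Module.End ℝ W)
    (x : W) (i : Fin 2) :
    b.repr (f x) i
      = LinearMap.toMatrix b b f i 0 * b.repr x 0 + LinearMap.toMatrix b b f i 1 * b.repr x 1 := by
  rw [← LinearMap.toMatrix_mulVec_repr b b f x]
  simp [Matrix.mulVec, dotProduct, Fin.sum_univ_two]

variable [FiniteDimensional ℝ W]

theorem _root_.LinearMap.IsAlt.apply_map_add_apply_map_of_finrank_eq_two
    (hW : finrank ℝ W = 2) {β : W →ₗ[ℝ] W →ₗ[ℝ] ℝ} (hβ : β.IsAlt) (f h : Module.End ℝ W) (u v : W) :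
    β (f u) (h v) + β (h u) (f v) = (trace ℝ W f * trace ℝ W h - trace ℝ W (f ∘ₗ h)) * β u v := by
  let b := Module.finBasisOfFinrankEq ℝ W hW
  rw [hβ.apply_eq_repr_mul_apply_basis b (f u), hβ.apply_eq_repr_mul_apply_basis b (h u),
    hβ.apply_eq_repr_mul_apply_basis b u]
  simp only [b.repr_apply_fin_two, trace_eq_matrix_trace ℝ b, toMatrix_comp b b b,
    Matrix.trace_fin_two, Matrix.mul_apply, Fin.sum_univ_two]
  ring

theorem _root_.LinearMap.comp_self_eq_of_finrank_eq_two (hW : finrank ℝ W = 2)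
    (f : Module.End ℝ W) :
    f ∘ₗ f = trace ℝ W f • f - ((trace ℝ W f ^ 2 - trace ℝ W (f ∘ₗ f)) / 2) • LinearMap.id := by
  let b := Module.finBasisOfFinrankEq ℝ W hW
  apply (toMatrix b b).injective
  simp only [trace_eq_matrix_trace ℝ b, map_sub, map_smul, toMatrix_comp b b b, toMatrix_id]
  ext i j
  fin_cases i <;> fin_cases j <;>
    simp [Matrix.trace_fin_two, Matrix.mul_apply, Fin.sum_univ_two] <;> ring

theorem KN_comp_eq (hW : finrank ℝ W = 2) (g : LinearMap.BilinForm ℝ V)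
    (ι : W →ₗ[ℝ] V) (π : V →ₗ[ℝ] W) (f h : Module.End ℝ W) (X₁ X₂ X₃ X₄ : V) :
    KN (fun X Y => g (ι (f (π X))) Y) (fun X Y => g (ι (h (π X))) Y) X₁ X₂ X₃ X₄
      = (trace ℝ W f * trace ℝ W h - trace ℝ W (f ∘ₗ h)) / 2
        * KN (fun X Y => g (ι (π X)) Y) (fun X Y => g (ι (π X)) Y) X₁ X₂ X₃ X₄ := by
  let φ : Module.Dual ℝ W := g.flip X₄ ∘ₗ ι
  let ψ : Module.Dual ℝ W := g.flip X₃ ∘ₗ ι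
  let β : W →ₗ[ℝ] W →ₗ[ℝ] ℝ := φ.smulRight ψ - ψ.smulRight φ
  have hβ : β.IsAlt := fun u => by simp [β, mul_comm]
  have hKN : ∀ f h : Module.End ℝ W,
      KN (fun X Y => g (ι (f (π X))) Y) (fun X Y => g (ι (h (π X))) Y) X₁ X₂ X₃ X₄
        = β (f (π X₁)) (h (π X₂)) + β (h (π X₁)) (f (π X₂)) := by
    intro f h
    simp only [KN, β, φ, ψ, LinearMap.sub_apply, coe_smulRight, coe_comp, Function.comp_apply,
      BilinForm.flip_apply, LinearMap.smul_apply, smul_eq_mul]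
    ring
  have hid := hKN LinearMap.id LinearMap.id
  simp only [LinearMap.id_apply] at hid
  rw [hKN, hid, hβ.apply_map_add_apply_map_of_finrank_eq_two hW]
  ring

end TwoDim

theorem statement19_general
    {V : Type*} [AddCommGroup V] [Module ℝ V]
    (g : LinearMap.BilinForm ℝ V)
    [FiniteDimensional ℝ V]
    (𝒜 : V →ₗ[ℝ] V)
    (A : V → V → ℝ) (hA : A = fun X Y => g (𝒜 X) Y)
    (hrank : LinearMap.rank 𝒜 = 2)
    (A2 : V → V → ℝ) (hA2 : A2 = fun X Y => A (𝒜 X) Y)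
    (A3 : V → V → ℝ) (hA3 : A3 = fun X Y => A (𝒜 (𝒜 X)) Y) :
    (∀ X Y, A3 X Y
      = LinearMap.trace ℝ V 𝒜 * A2 X Y
        + (1 / 2 : ℝ) * (LinearMap.trace ℝ V (𝒜 ∘ₗ 𝒜) - (LinearMap.trace ℝ V 𝒜) ^ 2)
          * A X Y) ∧
    (∀ X₁ X₂ X₃ X₄, KN A A2 X₁ X₂ X₃ X₄
      = (1 / 2 : ℝ) * LinearMap.trace ℝ V 𝒜 * KN A A X₁ X₂ X₃ X₄) ∧
    (∀ X₁ X₂ X₃ X₄, KN A2 A2 X₁ X₂ X₃ X₄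
      = -(1 / 2 : ℝ) * (LinearMap.trace ℝ V (𝒜 ∘ₗ 𝒜) - (LinearMap.trace ℝ V 𝒜) ^ 2)
        * KN A A X₁ X₂ X₃ X₄) ∧
    (∀ X₁ X₂ X₃ X₄,
      KN (fun X Y => A2 X Y - LinearMap.trace ℝ V 𝒜 * A X Y)
         (fun X Y => A2 X Y - LinearMap.trace ℝ V 𝒜 * A X Y) X₁ X₂ X₃ X₄
        = -(1 / 2 : ℝ) * (LinearMap.trace ℝ V (𝒜 ∘ₗ 𝒜) - (LinearMap.trace ℝ V 𝒜) ^ 2)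
          * KN A A X₁ X₂ X₃ X₄) := by
  let W := LinearMap.range 𝒜
  have hW : finrank ℝ W = 2 := finrank_eq_of_rank_eq hrank
  let ι := W.subtype
  let π := 𝒜.rangeRestrict
  let B := π ∘ₗ ι
  obtain rfl : A = fun X Y => g (ι (π X)) Y := hA
  obtain rfl : A2 = fun X Y => g (ι (B (π X))) Y := hA2
  obtain rfl : A3 = fun X Y => g (ι (B (B (π X)))) Y := hA3
  have htr : trace ℝ V 𝒜 = trace ℝ W B := trace_comp_comm' π ι
  have htr2 : trace ℝ V (𝒜 ∘ₗ 𝒜) = trace ℝ W (B ∘ₗ B) := trace_comp_comm' (B ∘ₗ π) ι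
  rw [htr2, htr]
  have hb (X₁ X₂ X₃ X₄ : V) := KN_comp_eq hW g ι π LinearMap.id B X₁ X₂ X₃ X₄
  have hc (X₁ X₂ X₃ X₄ : V) := KN_comp_eq hW g ι π B B X₁ X₂ X₃ X₄
  simp only [LinearMap.id_apply, LinearMap.id_comp, trace_id, hW, Nat.cast_ofNat] at hb
  refine ⟨fun X Y => ?_, fun X₁ X₂ X₃ X₄ => ?_, fun X₁ X₂ X₃ X₄ => ?_, fun X₁ X₂ X₃ X₄ => ?_⟩
  · have hB := LinearMap.congr_fun (comp_self_eq_of_finrank_eq_two hW B) (π X)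
    simp only [comp_apply, LinearMap.sub_apply, LinearMap.smul_apply, id_apply] at hB
    simp only [hB, map_sub, map_smul, LinearMap.sub_apply, LinearMap.smul_apply, smul_eq_mul]
    ring
  · rw [hb]; ring
  · rw [hc]; ring
  · have hb := hb X₁ X₂ X₃ X₄
    have hc := hc X₁ X₂ X₃ X₄
    simp only [KN] at hb hc ⊢
    linear_combination hc - 2 * trace ℝ W B * hb

/-- Kulkarni–Nomizu identities for a symmetric (0,2)-tensor of rank 2. -/
theorem statement19
    {V : Type*} [AddCommGroup V] [Module ℝ V]
    (n : ℕ) (hn : 3 ≤ n)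
    (g : LinearMap.BilinForm ℝ V)
    (hgsymm : ∀ X Y, g X Y = g Y X)
    (hgnd : ∀ X : V, (∀ Y, g X Y = 0) → X = 0)
    [FiniteDimensional ℝ V] (hdim : Module.finrank ℝ V = n)
    (𝒜 : V →ₗ[ℝ] V) (hsa : ∀ X Y, g (𝒜 X) Y = g X (𝒜 Y))
    (A : V → V → ℝ) (hA : A = fun X Y => g (𝒜 X) Y)
    (hrank : LinearMap.rank 𝒜 = 2)
    (A2 : V → V → ℝ) (hA2 : A2 = fun X Y => A (𝒜 X) Y)
    (A3 : V → V → ℝ) (hA3 : A3 = fun X Y => A (𝒜 (𝒜 X)) Y) :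
    (∀ X Y, A3 X Y
      = LinearMap.trace ℝ V 𝒜 * A2 X Y
        + (1 / 2 : ℝ) * (LinearMap.trace ℝ V (𝒜 ∘ₗ 𝒜) - (LinearMap.trace ℝ V 𝒜) ^ 2)
          * A X Y) ∧
    (∀ X₁ X₂ X₃ X₄, KN A A2 X₁ X₂ X₃ X₄
      = (1 / 2 : ℝ) * LinearMap.trace ℝ V 𝒜 * KN A A X₁ X₂ X₃ X₄) ∧
    (∀ X₁ X₂ X₃ X₄, KN A2 A2 X₁ X₂ X₃ X₄
      = -(1 / 2 : ℝ) * (LinearMap.trace ℝ V (𝒜 ∘ₗ 𝒜) - (LinearMap.trace ℝ V 𝒜) ^ 2)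
        * KN A A X₁ X₂ X₃ X₄) ∧
    (∀ X₁ X₂ X₃ X₄,
      KN (fun X Y => A2 X Y - LinearMap.trace ℝ V 𝒜 * A X Y)
         (fun X Y => A2 X Y - LinearMap.trace ℝ V 𝒜 * A X Y) X₁ X₂ X₃ X₄
        = -(1 / 2 : ℝ) * (LinearMap.trace ℝ V (𝒜 ∘ₗ 𝒜) - (LinearMap.trace ℝ V 𝒜) ^ 2)
          * KN A A X₁ X₂ X₃ X₄) :=
  statement19_general g 𝒜 A hA hrank A2 hA2 A3 hA3

end OVAff
end
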